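/- arXiv:0911.4254 — 4 statements merged into one kernel-verified Lean document; each statement's English description precedes it below -/
import Mathlib

section
/- Let n ≥ 1 and p ∈ (0,1) with p > 1 − (2n+2)^{−2}. For i.i.d. site percolation on ℤ^{n+1} with parameter p, almost surely there exists a random function L : ℤⁿ → ℕ such that (i) for each x ∈ ℤⁿ the site (x, L(x)) is open, and (ii) |L(x) − L(y)| ≤ 1 whenever ‖x − y‖₁ = 1. -/
/-!
Call `(x, k)` grounded if height `≤ 0` can be reached from it by diagonal steps
`(x, k) → (x ± eᵢ, k + 1)` and by vertical steps `(x, k) → (x, k - 1)` taken only out of closed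
sites. The least height `L x` at which `(x, ·)` is not grounded is open, since otherwise one
could step down from it, and `L y ≤ L x + 1` for neighbours, since a diagonal step would
otherwise ground `(x, L x)`.

A shortest grounding path has distinct down-sites, and with `m` steps from height `k` at least
`(m + k) / 2` of them. With `q = 1 - p` the union bound gives
`P((x, k) grounded) ≤ ∑ₘ (2n + 1)ᵐ √q ^ (m + k)`, which tends to `0` as `k → ∞` because
`(2n + 1) √q < 1`; so almost surely every `L x` is finite.
-/

open MeasureTheory ProbabilityTheory
open scoped ENNReal

namespace ENNReal

theorem tsum_pow_length (α : Type*) [Fintype α] (r : ℝ≥0∞) :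
    ∑' s : List α, r ^ s.length = (1 - Fintype.card α * r)⁻¹ := by
  calc ∑' s : List α, r ^ s.length
      = ∑' σ : (Σ m : ℕ, Fin m → α), r ^ σ.1 := by
        rw [← List.equivSigmaTuple.symm.tsum_eq]; simp [List.equivSigmaTuple]
    _ = ∑' m : ℕ, ∑' _ : Fin m → α, r ^ m := ENNReal.tsum_sigma' _
    _ = ∑' m : ℕ, (Fintype.card α * r) ^ m := by
        congr 1 with m
        simp [mul_pow]
    _ = (1 - Fintype.card α * r)⁻¹ := ENNReal.tsum_geometric _

theorem one_sub_ofReal_le_ofReal_sqrt_sq (p : ℝ) :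
    1 - ENNReal.ofReal p ≤ ENNReal.ofReal √(1 - p) ^ 2 := by
  rw [← ENNReal.ofReal_pow (Real.sqrt_nonneg _), Real.sq_sqrt', tsub_le_iff_right]
  calc (1 : ℝ≥0∞) = ENNReal.ofReal (1 - p + p) := by simp
    _ ≤ ENNReal.ofReal (1 - p) + ENNReal.ofReal p := ENNReal.ofReal_add_le
    _ ≤ ENNReal.ofReal (max (1 - p) 0) + ENNReal.ofReal p := by gcongr; exact le_max_left _ _

end ENNReal

namespace LipschitzPercolation

variable {n : ℕ}

abbrev Site (n : ℕ) := (Fin n → ℤ) × ℤ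

/-- `none` is a vertical step down, `some (i, b)` a diagonal step up in the direction `±eᵢ`. -/
abbrev Step (n : ℕ) := Option (Fin n × Bool)

theorem card_step : Fintype.card (Step n) = 2 * n + 1 := by
  simp [Fintype.card_option, mul_comm]

def unitVec (d : Fin n × Bool) : Fin n → ℤ := Pi.single d.1 (if d.2 then 1 else -1)

theorem exists_unitVec_eq {u : Fin n → ℤ} (h : ∑ i, (u i).natAbs = 1) :
    ∃ d, unitVec d = u := by
  obtain ⟨i, hi⟩ : ∃ i, (u i).natAbs ≠ 0 := by
    by_contra! hzero
    simp [hzero] at h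
  have hsplit := Finset.add_sum_erase Finset.univ (fun j => (u j).natAbs) (Finset.mem_univ i)
  have hrest : ∑ j ∈ Finset.univ.erase i, (u j).natAbs = 0 := by omega
  have hzero : ∀ j ≠ i, u j = 0 := fun j hj => Int.natAbs_eq_zero.1 <|
    Finset.sum_eq_zero_iff.1 hrest j (Finset.mem_erase.2 ⟨hj, Finset.mem_univ j⟩)
  have hunit : u i = 1 ∨ u i = -1 := by omega
  refine ⟨(i, decide (u i = 1)), funext fun j => ?_⟩
  rcases eq_or_ne j i with rfl | hj
  · rcases hunit with h1 | h1 <;> simp [unitVec, h1]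
  · simp [unitVec, hj, hzero j hj]

def pathEnd (x : Fin n → ℤ) (k : ℤ) : List (Step n) → Site n
  | [] => (x, k)
  | none :: s => pathEnd x (k - 1) s
  | some d :: s => pathEnd (x + unitVec d) (k + 1) s

def downSites (x : Fin n → ℤ) (k : ℤ) : List (Step n) → List (Site n)
  | [] => []
  | none :: s => (x, k) :: downSites x (k - 1) s
  | some d :: s => downSites (x + unitVec d) (k + 1) s

theorem pathEnd_append (x : Fin n → ℤ) (k : ℤ) (a b : List (Step n)) :
    pathEnd x k (a ++ b) = pathEnd (pathEnd x k a).1 (pathEnd x k a).2 b := by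
  induction a generalizing x k with
  | nil => rfl
  | cons d a ih => cases d <;> simp [pathEnd, ih]

theorem downSites_append (x : Fin n → ℤ) (k : ℤ) (a b : List (Step n)) :
    downSites x k (a ++ b) =
      downSites x k a ++ downSites (pathEnd x k a).1 (pathEnd x k a).2 b := by
  induction a generalizing x k with
  | nil => rfl
  | cons d a ih => cases d <;> simp [pathEnd, downSites, ih]

theorem pathEnd_snd (x : Fin n → ℤ) (k : ℤ) (s : List (Step n)) :
    (pathEnd x k s).2 = k + s.length - 2 * (downSites x k s).length := by
  induction s generalizing x k with
  | nil => simp [pathEnd, downSites]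
  | cons d s ih => cases d <;> simp [pathEnd, downSites, ih] <;> ring

theorem exists_eq_append_of_mem_downSites {z : Site n} {x : Fin n → ℤ} {k : ℤ}
    {s : List (Step n)} (h : z ∈ downSites x k s) :
    ∃ a b, s = a ++ none :: b ∧ pathEnd x k a = z := by
  induction s generalizing x k with
  | nil => simp [downSites] at h
  | cons d s ih =>
    cases d with
    | none =>
      rcases List.mem_cons.1 h with rfl | h
      · exact ⟨[], s, rfl, rfl⟩
      · obtain ⟨a, b, rfl, hend⟩ := ih h
        exact ⟨none :: a, b, rfl, hend⟩
    | some d =>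
      obtain ⟨a, b, rfl, hend⟩ := ih h
      exact ⟨some d :: a, b, rfl, hend⟩

theorem exists_eq_append_of_sublist_downSites {z : Site n} {x : Fin n → ℤ} {k : ℤ}
    {s : List (Step n)} (h : List.Sublist [z, z] (downSites x k s)) :
    ∃ a b, s = a ++ none :: b ∧ pathEnd x k a = z ∧ z ∈ downSites z.1 (z.2 - 1) b := by
  induction s generalizing x k with
  | nil => simp [downSites] at h
  | cons d s ih =>
    cases d with
    | none =>
      rw [downSites] at h
      cases h with
      | cons _ h =>
        obtain ⟨a, b, rfl, hend, hmem⟩ := ih h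
        exact ⟨none :: a, b, rfl, hend, hmem⟩
      | cons_cons _ h => exact ⟨[], s, rfl, rfl, List.singleton_sublist.1 h⟩
    | some d =>
      obtain ⟨a, b, rfl, hend, hmem⟩ := ih h
      exact ⟨some d :: a, b, rfl, hend, hmem⟩

/-- A path stepping down twice out of the same site can skip the loop between the two visits. -/
theorem exists_shorter_of_not_nodup {x : Fin n → ℤ} {k : ℤ} {s : List (Step n)}
    (hs : ¬ (downSites x k s).Nodup) :
    ∃ t : List (Step n), t.length < s.length ∧ pathEnd x k t = pathEnd x k s ∧
      downSites x k t ⊆ downSites x k s := by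
  obtain ⟨⟨y, h⟩, hdup⟩ : ∃ z, List.Sublist [z, z] (downSites x k s) := by
    simpa [List.nodup_iff_sublist] using hs
  obtain ⟨a, b, rfl, hend, hmem⟩ := exists_eq_append_of_sublist_downSites hdup
  obtain ⟨b₁, b₂, rfl, hend'⟩ := exists_eq_append_of_mem_downSites hmem
  have hend_a : ∀ c, pathEnd x k (a ++ none :: c) = pathEnd y (h - 1) c := by
    intro c; rw [pathEnd_append, hend]; rfl
  have hdown_a : ∀ c, downSites x k (a ++ none :: c) =
      downSites x k a ++ (y, h) :: downSites y (h - 1) c := by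
    intro c; rw [downSites_append, hend]; rfl
  have hdown_b : downSites y (h - 1) (b₁ ++ none :: b₂) =
      downSites y (h - 1) b₁ ++ (y, h) :: downSites y (h - 1) b₂ := by
    rw [downSites_append, hend']; rfl
  refine ⟨a ++ none :: b₂, by simp, ?_, ?_⟩
  · rw [hend_a, hend_a, pathEnd_append, hend']; rfl
  · intro w hw
    rw [hdown_a] at hw ⊢
    rw [hdown_b]
    simp only [List.mem_append, List.mem_cons] at hw ⊢
    tauto

inductive Grounded (o : Site n → Bool) : (Fin n → ℤ) → ℤ → Prop
  | base (x : Fin n → ℤ) (k : ℤ) : k ≤ 0 → Grounded o x k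
  | down (x : Fin n → ℤ) (k : ℤ) : o (x, k) = false → Grounded o x (k - 1) → Grounded o x k
  | up (x : Fin n → ℤ) (d : Fin n × Bool) (k : ℤ) :
      Grounded o (x + unitVec d) (k + 1) → Grounded o x k

def IsGroundingPath (o : Site n → Bool) (x : Fin n → ℤ) (k : ℤ) (s : List (Step n)) : Prop :=
  (pathEnd x k s).2 ≤ 0 ∧ ∀ z ∈ downSites x k s, o z = false

theorem Grounded.exists_isGroundingPath {o : Site n → Bool} {x : Fin n → ℤ} {k : ℤ}
    (h : Grounded o x k) : ∃ s, IsGroundingPath o x k s := by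
  induction h with
  | base x k hk => exact ⟨[], hk, by simp [downSites]⟩
  | down x k hclosed _ ih =>
    obtain ⟨s, hend, hdown⟩ := ih
    exact ⟨none :: s, hend, by simpa [downSites, hclosed] using hdown⟩
  | up x d k _ ih =>
    obtain ⟨s, hend, hdown⟩ := ih
    exact ⟨some d :: s, hend, hdown⟩

theorem Grounded.exists_isGroundingPath_nodup {o : Site n → Bool} {x : Fin n → ℤ} {k : ℤ}
    (h : Grounded o x k) : ∃ s, IsGroundingPath o x k s ∧ (downSites x k s).Nodup := by
  classical
  have hex : ∃ m, ∃ s : List (Step n), s.length = m ∧ IsGroundingPath o x k s := by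
    obtain ⟨s, hs⟩ := h.exists_isGroundingPath
    exact ⟨_, s, rfl, hs⟩
  obtain ⟨s, hlen, hend, hdown⟩ := Nat.find_spec hex
  refine ⟨s, ⟨hend, hdown⟩, ?_⟩
  by_contra hnodup
  obtain ⟨t, hlt, hend', hsub⟩ := exists_shorter_of_not_nodup hnodup
  exact Nat.find_min hex (hlen ▸ hlt) ⟨t, rfl, hend' ▸ hend, fun z hz => hdown z (hsub hz)⟩

theorem length_add_le_two_mul {x : Fin n → ℤ} {k : ℕ} {s : List (Step n)}
    (hs : (pathEnd x k s).2 ≤ 0) : s.length + k ≤ 2 * (downSites x k s).length := by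
  have := pathEnd_snd x k s
  omega

noncomputable def groundLevel (o : Site n → Bool) (x : Fin n → ℤ) : ℕ :=
  sInf {k : ℕ | ¬ Grounded o x k}

section Surface

variable {o : Site n → Bool}

theorem open_at_groundLevel (h : ∀ x, ∃ k : ℕ, ¬ Grounded o x k) (x : Fin n → ℤ) :
    o (x, groundLevel o x) = true := by
  by_contra hclosed
  have hnot : ¬ Grounded o x (groundLevel o x) := Nat.sInf_mem (h x)
  refine hnot ?_
  rcases Nat.eq_zero_or_pos (groundLevel o x) with h0 | hpos
  · exact .base x _ (by simp [h0])
  · have hbelow : Grounded o x ((groundLevel o x - 1 : ℕ) : ℤ) :=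
      not_not.1 (Nat.notMem_of_lt_sInf (Nat.sub_lt hpos one_pos))
    refine .down x _ (by simpa using hclosed) ?_
    rwa [Nat.cast_sub hpos, Nat.cast_one] at hbelow

theorem groundLevel_add_unitVec_le (h : ∀ x, ∃ k : ℕ, ¬ Grounded o x k) (x : Fin n → ℤ)
    (d : Fin n × Bool) : groundLevel o (x + unitVec d) ≤ groundLevel o x + 1 := by
  have hnot : ¬ Grounded o x (groundLevel o x) := Nat.sInf_mem (h x)
  refine Nat.sInf_le fun hup => hnot (.up x d _ ?_)
  exact_mod_cast hup

theorem exists_lipschitz_open_surface (h : ∀ x, ∃ k : ℕ, ¬ Grounded o x k) :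
    ∃ L : (Fin n → ℤ) → ℕ, (∀ x, o (x, L x) = true) ∧
      ∀ x y : Fin n → ℤ, ∑ i, (x i - y i).natAbs = 1 → |(L x : ℤ) - L y| ≤ 1 := by
  refine ⟨groundLevel o, open_at_groundLevel h, fun x y hxy => ?_⟩
  have hyx : ∑ i, (y i - x i).natAbs = 1 := by
    rw [← hxy]; exact Finset.sum_congr rfl fun i _ => by omega
  obtain ⟨d, hd⟩ := exists_unitVec_eq (u := y - x) (by simpa using hyx)
  obtain ⟨e, he⟩ := exists_unitVec_eq (u := x - y) (by simpa using hxy)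
  have hy := groundLevel_add_unitVec_le h x d
  have hx := groundLevel_add_unitVec_le h y e
  rw [hd, add_sub_cancel] at hy
  rw [he, add_sub_cancel] at hx
  rw [abs_le]
  constructor <;> omega

end Surface

section Probability

variable {Ω : Type*} [MeasurableSpace Ω] {P : Measure Ω} {X : Site n → Ω → Bool} {r : ℝ≥0∞}

theorem measure_biInter_closed_le (hindep : iIndepFun X P)
    (hclosed : ∀ z, P (X z ⁻¹' {false}) ≤ r ^ 2) (S : Finset (Site n)) :
    P (⋂ z ∈ S, X z ⁻¹' {false}) ≤ r ^ (2 * S.card) := by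
  rw [hindep.measure_inter_preimage_eq_mul S fun _ _ => measurableSet_singleton false, pow_mul]
  exact Finset.prod_le_pow_card S _ _ fun z _ => hclosed z

theorem measure_grounded_le (hindep : iIndepFun X P)
    (hclosed : ∀ z, P (X z ⁻¹' {false}) ≤ r ^ 2) (hr : r ≤ 1) (x : Fin n → ℤ) (k : ℕ) :
    P {ω | Grounded (fun z => X z ω) x k} ≤ (1 - (2 * n + 1 : ℕ) * r)⁻¹ * r ^ k := by
  classical
  let paths := {s : List (Step n) // (pathEnd x k s).2 ≤ 0 ∧ (downSites x k s).Nodup}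
  have hsub : {ω | Grounded (fun z => X z ω) x k} ⊆
      ⋃ s : paths, ⋂ z ∈ (downSites x k s.1).toFinset, X z ⁻¹' {false} := by
    intro ω hω
    obtain ⟨s, ⟨hend, hdown⟩, hnodup⟩ := Grounded.exists_isGroundingPath_nodup hω
    simp only [Set.mem_iUnion, Set.mem_iInter, List.mem_toFinset]
    exact ⟨⟨s, hend, hnodup⟩, hdown⟩
  calc P {ω | Grounded (fun z => X z ω) x k}
      ≤ ∑' s : paths, P (⋂ z ∈ (downSites x k s.1).toFinset, X z ⁻¹' {false}) :=
        (measure_mono hsub).trans (measure_iUnion_le _)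
    _ ≤ ∑' s : paths, r ^ (s.1.length + k) := by
        refine ENNReal.tsum_le_tsum fun s => (measure_biInter_closed_le hindep hclosed _).trans ?_
        rw [List.toFinset_card_of_nodup s.2.2]
        exact pow_le_pow_of_le_one zero_le hr (length_add_le_two_mul s.2.1)
    _ ≤ ∑' s : List (Step n), r ^ (s.length + k) :=
        ENNReal.tsum_comp_le_tsum_of_injective Subtype.val_injective
          (fun s : List (Step n) => r ^ (s.length + k))
    _ = (1 - (2 * n + 1 : ℕ) * r)⁻¹ * r ^ k := by
        simp_rw [pow_add]
        rw [ENNReal.tsum_mul_right, ENNReal.tsum_pow_length, card_step]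

theorem ae_forall_exists_not_grounded (hindep : iIndepFun X P)
    (hclosed : ∀ z, P (X z ⁻¹' {false}) ≤ r ^ 2) (hr : (2 * n + 1 : ℕ) * r < 1) :
    ∀ᵐ ω ∂P, ∀ x, ∃ k : ℕ, ¬ Grounded (fun z => X z ω) x k := by
  have hr1 : r < 1 := by
    refine lt_of_le_of_lt (le_mul_of_one_le_left' ?_) hr
    exact_mod_cast Nat.succ_pos _
  have hC : (1 - (2 * n + 1 : ℕ) * r)⁻¹ ≠ ⊤ := ENNReal.inv_ne_top.2 (tsub_pos_of_lt hr).ne'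
  have hlim : Filter.Tendsto (fun k : ℕ => (1 - (2 * n + 1 : ℕ) * r)⁻¹ * r ^ k)
      Filter.atTop (nhds 0) := by
    simpa using ENNReal.Tendsto.const_mul
      (ENNReal.tendsto_pow_atTop_nhds_zero_of_lt_one hr1) (Or.inr hC)
  refine ae_all_iff.2 fun x => ae_iff.2 <| le_zero_iff.1 <| ge_of_tendsto' hlim fun k => ?_
  exact (measure_mono fun ω hω => not_not.1 (not_exists.1 hω k)).trans
    (measure_grounded_le hindep hclosed hr1.le x k)

end Probability

end LipschitzPercolation

theorem mul_sqrt_one_sub_lt_one (n : ℕ) {p : ℝ} (hp : 1 - ((2 * n + 2 : ℝ)) ^ (-2 : ℤ) < p) :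
    (2 * n + 1) * √(1 - p) < 1 := by
  have hpos : (0 : ℝ) < 2 * n + 2 := by positivity
  have hsqrt : √(1 - p) < (2 * n + 2 : ℝ)⁻¹ := by
    rw [Real.sqrt_lt' (inv_pos.2 hpos), inv_pow, ← zpow_natCast, ← zpow_neg]
    exact_mod_cast (by linarith : 1 - p < (2 * n + 2 : ℝ) ^ (-2 : ℤ))
  calc (2 * n + 1 : ℝ) * √(1 - p) ≤ (2 * n + 2) * √(1 - p) := by gcongr; norm_num
    _ < (2 * n + 2) * (2 * n + 2 : ℝ)⁻¹ := by gcongr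
    _ = 1 := mul_inv_cancel₀ hpos.ne'

open LipschitzPercolation in
theorem stmt_9_general {Ω : Type*} [MeasurableSpace Ω] (P : Measure Ω) [IsProbabilityMeasure P]
    (n : ℕ) (p : ℝ)
    (hpc : 1 - ((2 * n + 2 : ℝ)) ^ (-2 : ℤ) < p)
    -- i.i.d. site percolation on ℤ^{n+1}: `X z ω = true` iff the site `z` is open
    (X : ((Fin n → ℤ) × ℤ) → Ω → Bool) (hXmeas : ∀ z, Measurable (X z))
    (hindep : iIndepFun X P)
    (hdist : ∀ z, P {ω | X z ω = true} = ENNReal.ofReal p) :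
    ∀ᵐ ω ∂P, ∃ L : (Fin n → ℤ) → ℕ,
      (∀ x : Fin n → ℤ, X (x, (L x : ℤ)) ω = true) ∧
      (∀ x y : Fin n → ℤ, (∑ i, (x i - y i).natAbs) = 1 →
        |(L x : ℤ) - (L y : ℤ)| ≤ 1) := by
  set r := ENNReal.ofReal √(1 - p)
  have hclosed : ∀ z, P (X z ⁻¹' {false}) ≤ r ^ 2 := fun z => by
    have hcompl : X z ⁻¹' {false} = (X z ⁻¹' {true})ᶜ := by ext; simp
    rw [hcompl, prob_compl_eq_one_sub (hXmeas z (measurableSet_singleton true))]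
    exact (hdist z).symm ▸ ENNReal.one_sub_ofReal_le_ofReal_sqrt_sq p
  have hr : (2 * n + 1 : ℕ) * r < 1 := by
    rw [← ENNReal.ofReal_natCast, ← ENNReal.ofReal_mul (Nat.cast_nonneg _), ENNReal.ofReal_lt_one]
    exact_mod_cast mul_sqrt_one_sub_lt_one n hpc
  filter_upwards [ae_forall_exists_not_grounded hindep hclosed hr] with ω hω
  exact exists_lipschitz_open_surface hω

theorem stmt_9 {Ω : Type*} [MeasurableSpace Ω] (P : Measure Ω) [IsProbabilityMeasure P]
    (n : ℕ) (hn : 1 ≤ n) (p : ℝ) (hp : p ∈ Set.Ioo (0 : ℝ) 1)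
    (hpc : 1 - ((2 * n + 2 : ℝ)) ^ (-2 : ℤ) < p)
    -- i.i.d. site percolation on ℤ^{n+1}: `X z ω = true` iff the site `z` is open
    (X : ((Fin n → ℤ) × ℤ) → Ω → Bool) (hXmeas : ∀ z, Measurable (X z))
    (hindep : iIndepFun X P)
    (hdist : ∀ z, P {ω | X z ω = true} = ENNReal.ofReal p) :
    ∀ᵐ ω ∂P, ∃ L : (Fin n → ℤ) → ℕ,
      (∀ x : Fin n → ℤ, X (x, (L x : ℤ)) ω = true) ∧
      (∀ x y : Fin n → ℤ, (∑ i, (x i - y i).natAbs) = 1 →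
        |(L x : ℤ) - (L y : ℤ)| ≤ 1) :=
  stmt_9_general P n p hpc X hXmeas hindep hdist
end

section
/- In the setting of Lipschitz percolation on ℤ^{n+1} with parameter p > 1 − (2n+2)^{−2}, the minimal Lipschitz surface L satisfies the exponential tail bound: there exists A < ∞ such that P(L(0) > k) ≤ A·ν^k for all k ≥ 0, where ν = (2n+2)(1−p) < 1. -/
open MeasureTheory ProbabilityTheory

/-- `L` is a Lipschitz open surface for the configuration `η` of open sites. -/
def IsLipSurface {n : ℕ} (η : ((Fin n → ℤ) × ℤ) → Bool) (L : (Fin n → ℤ) → ℕ) : Prop :=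
  (∀ x : Fin n → ℤ, η (x, (L x : ℤ)) = true) ∧
  (∀ x y : Fin n → ℤ, (∑ i, (x i - y i).natAbs) = 1 → |(L x : ℤ) - (L y : ℤ)| ≤ 1)

/-!
If `L 0 > k`, some λ-path from level `0` climbs to height `≥ k` in column `0` using only
up-steps into closed sites: otherwise one plus the highest point reachable by such paths in each
column would be a Lipschitz open surface lying below `L` at the origin. After cutting loops the
closed sites entered are distinct, so a path with `u` up-steps and `d` down-steps (`u - d ≥ k`)
is admissible with probability `(1 - p)^u`. Writing `1 - p = N⁻¹ ν` with `N = 2n + 2`, this is at most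
`ν^k N^{-u} ν^d`, and summing over all words gives the geometric series `∑ (N⁻¹ + 2n ν)^r`, which
converges because `ν < N⁻¹`.
-/

open scoped ENNReal

lemma measure_forall_mem_eq_false {Ω ι : Type*} [MeasurableSpace Ω] {P : Measure Ω}
    {X : ι → Ω → Bool} (hindep : iIndepFun X P) {q : ℝ≥0∞}
    (hq : ∀ i, P {ω | X i ω = false} = q) (s : Finset ι) :
    P {ω | ∀ i ∈ s, X i ω = false} = q ^ s.card := by
  have := hindep.meas_biInter (S := s) (s := fun i => {ω | X i ω = false})
    fun i _ => ⟨{false}, measurableSet_singleton false, rfl⟩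
  simpa [Set.ofPred_forall, hq] using this

lemma measure_eq_false {Ω : Type*} [MeasurableSpace Ω] {P : Measure Ω} [IsProbabilityMeasure P]
    {f : Ω → Bool} (hf : Measurable f) {p : ℝ} (hp : 0 ≤ p)
    (htrue : P {ω | f ω = true} = ENNReal.ofReal p) :
    P {ω | f ω = false} = ENNReal.ofReal (1 - p) := by
  have hcompl : {ω | f ω = false} = {ω | f ω = true}ᶜ := by ext; simp
  have hmeas : MeasurableSet {ω | f ω = true} := hf (measurableSet_singleton true)
  rw [hcompl, prob_compl_eq_one_sub hmeas, htrue,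
    ENNReal.ofReal_sub 1 hp, ENNReal.ofReal_one]

lemma mul_one_sub_lt_inv {N p : ℝ} (hN : 0 < N) (h : 1 - N ^ (-2 : ℤ) < p) :
    N * (1 - p) < N⁻¹ := by
  have : 1 - p < N⁻¹ * N⁻¹ := by rw [zpow_neg, zpow_two, mul_inv] at h; linarith
  calc N * (1 - p) < N * (N⁻¹ * N⁻¹) := by gcongr
    _ = N⁻¹ := by field_simp

lemma inv_add_mul_lt_one {n : ℕ} {ν : ℝ} (h : ν < (2 * n + 2 : ℝ)⁻¹) :
    (2 * n + 2 : ℝ)⁻¹ + 2 * n * ν < 1 := by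
  have hN : 0 < (2 * n + 2 : ℝ) := by positivity
  calc (2 * n + 2 : ℝ)⁻¹ + 2 * n * ν ≤ (2 * n + 1) * (2 * n + 2 : ℝ)⁻¹ := by
        nlinarith [mul_le_mul_of_nonneg_left h.le (by positivity : (0 : ℝ) ≤ 2 * n)]
    _ < (2 * n + 2) * (2 * n + 2 : ℝ)⁻¹ := by gcongr; linarith
    _ = 1 := mul_inv_cancel₀ hN.ne'

lemma ENNReal.tsum_prod_map_eq_tsum_pow {α : Type*} [Fintype α] (g : α → ℝ≥0∞) :
    ∑' w : List α, (w.map g).prod = ∑' r : ℕ, (∑ a, g a) ^ r := by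
  rw [← (List.equivSigmaTuple (α := α)).symm.tsum_eq, ENNReal.tsum_sigma']
  refine tsum_congr fun r => ?_
  simp [Fintype.sum_pow, List.equivSigmaTuple, List.map_ofFn, List.prod_ofFn]

namespace LipschitzPercolation

variable {n : ℕ}

def Step.shift : Step n → Fin n → ℤ
  | none => 0
  | some (i, b) => Pi.single i (if b then 1 else -1)

def Step.move (s : Step n) (z : Site n) : Site n :=
  (z.1 + s.shift, if s = none then z.2 + 1 else z.2 - 1)

@[simp] lemma Step.move_none (z : Site n) : Step.move none z = (z.1, z.2 + 1) := by
  simp [Step.move, Step.shift]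

def endSite : Site n → List (Step n) → Site n
  | z, [] => z
  | z, s :: w => endSite (Step.move s z) w

def upSites : Site n → List (Step n) → List (Site n)
  | _, [] => []
  | z, none :: w => Step.move none z :: upSites (Step.move none z) w
  | z, some d :: w => upSites (Step.move (some d) z) w

def IsAdmissible (η : Site n → Bool) (z : Site n) (w : List (Step n)) : Prop :=
  ∀ q ∈ upSites z w, η q = false

@[simp] lemma endSite_nil (z : Site n) : endSite z [] = z := rfl
@[simp] lemma endSite_cons (z : Site n) (s : Step n) (w : List (Step n)) :
    endSite z (s :: w) = endSite (Step.move s z) w := rfl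

lemma endSite_append (z : Site n) (w w' : List (Step n)) :
    endSite z (w ++ w') = endSite (endSite z w) w' := by
  induction w generalizing z <;> simp [*]

lemma upSites_append (z : Site n) (w w' : List (Step n)) :
    upSites z (w ++ w') = upSites z w ++ upSites (endSite z w) w' := by
  induction w generalizing z with
  | nil => rfl
  | cons s w ih => rcases s with _ | d <;> simp [upSites, ih]

lemma length_upSites (z : Site n) (w : List (Step n)) :
    (upSites z w).length = w.count none := by
  induction w generalizing z with
  | nil => rfl
  | cons s w ih => rcases s with _ | d <;> simp [upSites, ih]

lemma endSite_fst (z : Site n) (w : List (Step n)) :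
    (endSite z w).1 = z.1 + (w.map Step.shift).sum := by
  induction w generalizing z with
  | nil => simp
  | cons s w ih => simp [ih, Step.move, add_assoc]

lemma endSite_snd (z : Site n) (w : List (Step n)) :
    (endSite z w).2 = z.2 + 2 * w.count none - w.length := by
  induction w generalizing z with
  | nil => simp
  | cons s w ih =>
    rcases s with _ | d <;> simp [ih, Step.move] <;> ring

lemma upSites_eq_nil (z : Site n) {w : List (Step n)} (hw : none ∉ w) : upSites z w = [] := by
  induction w generalizing z with
  | nil => rfl
  | cons s w ih =>
    rcases s with _ | d
    · simp at hw
    · exact ih _ (by simpa using hw)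

lemma exists_down_word (x y : Fin n → ℤ) :
    ∃ w : List (Step n), none ∉ w ∧ w.length = ∑ i, (x i - y i).natAbs ∧
      ∀ h : ℤ, endSite (x, h) w = (y, h - w.length) := by
  induction hD : ∑ i, (x i - y i).natAbs generalizing x with
  | zero =>
    have hxy : x = y := funext fun i => by
      have := (Finset.sum_eq_zero_iff.1 hD) i (Finset.mem_univ i)
      omega
    exact ⟨[], by simp, rfl, by simp [hxy]⟩
  | succ D ih =>
    obtain ⟨i, hi⟩ : ∃ i, x i ≠ y i := by
      by_contra! hxy
      simp [hxy] at hD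
    set s : Step n := some (i, decide (x i < y i))
    have hD' : ∑ j, ((Step.move s (x, 0)).1 j - y j).natAbs = D := by
      rw [Fintype.sum_eq_add_sum_compl i] at hD ⊢
      have hrest : ∀ j ∈ ({i}ᶜ : Finset (Fin n)),
          ((Step.move s (x, 0)).1 j - y j).natAbs = (x j - y j).natAbs := fun j hj => by
        simp [s, Step.move, Step.shift, show j ≠ i by simpa using hj]
      rw [Finset.sum_congr rfl hrest]
      by_cases hlt : x i < y i <;> simp [s, Step.move, Step.shift, hlt] <;> omega
    obtain ⟨w, hw, hlen, hend⟩ := ih _ hD'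
    refine ⟨s :: w, by simpa [s] using hw, by simp [hlen], fun h => ?_⟩
    have := hend (h - 1)
    simp only [endSite_cons, List.length_cons]
    convert this using 2
    · simp [Step.move, s]
    · push_cast; ring

lemma exists_eq_append_of_mem_upSites {z q : Site n} {w : List (Step n)}
    (hq : q ∈ upSites z w) :
    ∃ a b : List (Step n), w = a ++ none :: b ∧ Step.move none (endSite z a) = q := by
  induction w generalizing z with
  | nil => simp [upSites] at hq
  | cons s w ih =>
    rcases s with _ | d
    · rcases List.mem_cons.1 hq with rfl | hq
      · exact ⟨[], w, rfl, rfl⟩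
      · obtain ⟨a, b, rfl, hab⟩ := ih hq
        exact ⟨none :: a, b, rfl, hab⟩
    · obtain ⟨a, b, rfl, hab⟩ := ih hq
      exact ⟨some d :: a, b, rfl, hab⟩

lemma exists_nodup_upSites (z : Site n) (w : List (Step n)) :
    ∃ w' : List (Step n), endSite z w' = endSite z w ∧ (upSites z w').Nodup ∧
      upSites z w' ⊆ upSites z w := by
  induction w generalizing z with
  | nil => exact ⟨[], rfl, List.nodup_nil, fun _ h => h⟩
  | cons s w ih =>
    obtain ⟨w', hend, hnodup, hsub⟩ := ih (Step.move s z)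
    cases s with
    | some d => exact ⟨some d :: w', hend, hnodup, hsub⟩
    | none =>
      set q := Step.move none z
      by_cases hq : q ∉ upSites q w'
      · exact ⟨none :: w', hend, List.nodup_cons.2 ⟨hq, hnodup⟩, List.cons_subset_cons q hsub⟩
      -- `w'` returns to `q`: cut out the loop before the return.
      obtain ⟨a, b, rfl, hloop⟩ := exists_eq_append_of_mem_upSites (not_not.1 hq)
      have hups : upSites q (a ++ none :: b) = upSites q a ++ q :: upSites q b := by
        simp only [upSites_append, upSites, hloop]
      refine ⟨none :: b, ?_, ?_, ?_⟩
      · show endSite q b = endSite q w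
        rw [← hend, endSite_append, endSite_cons, hloop]
      · rw [hups] at hnodup
        exact hnodup.sublist (List.sublist_append_right _ _)
      · refine List.Subset.trans ?_ (List.cons_subset_cons q hsub)
        show q :: upSites q b ⊆ q :: upSites q (a ++ none :: b)
        rw [hups]
        intro r hr
        simp only [List.mem_cons, List.mem_append] at hr ⊢
        tauto

def Reachable (η : Site n → Bool) (z : Site n) : Prop :=
  ∃ (x₀ : Fin n → ℤ) (w : List (Step n)), IsAdmissible η (x₀, 0) w ∧ endSite (x₀, 0) w = z

variable {η : Site n → Bool}

lemma reachable_height_zero (x : Fin n → ℤ) : Reachable η (x, 0) :=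
  ⟨x, [], fun _ h => by simp [upSites] at h, rfl⟩

lemma Reachable.extend {z : Site n} (hz : Reachable η z) {w : List (Step n)}
    (hw : IsAdmissible η z w) : Reachable η (endSite z w) := by
  obtain ⟨x₀, w₀, hw₀, rfl⟩ := hz
  refine ⟨x₀, w₀ ++ w, fun q hq => ?_, endSite_append _ _ _⟩
  rw [upSites_append, List.mem_append] at hq
  exact hq.elim (hw₀ q) (hw q)

lemma Reachable.down {z : Site n} (hz : Reachable η z) {w : List (Step n)} (hw : none ∉ w) :
    Reachable η (endSite z w) :=
  hz.extend fun q hq => by simp [upSites_eq_nil z hw] at hq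

lemma Reachable.up {x : Fin n → ℤ} {h : ℤ} (hz : Reachable η (x, h)) (hη : η (x, h + 1) = false) :
    Reachable η (x, h + 1) := by
  simpa using hz.extend (w := [none]) fun q hq => by simp_all [upSites]

lemma isLipSurface_of_isGreatest (M : (Fin n → ℤ) → ℤ)
    (hM : ∀ x, IsGreatest {h | Reachable η (x, h)} (M x)) :
    IsLipSurface η (fun x => (M x + 1).toNat) := by
  have hM0 (x) : 0 ≤ M x := (hM x).2 (reachable_height_zero x)
  have hneighbor (x y : Fin n → ℤ) (hxy : ∑ i, (x i - y i).natAbs = 1) : M x - 1 ≤ M y := by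
    obtain ⟨w, hw, hlen, hend⟩ := exists_down_word x y
    have := ((hM x).1.down hw)
    rw [hend, hlen, hxy] at this
    exact (hM y).2 this
  refine ⟨fun x => ?_, fun x y hxy => ?_⟩
  · -- the site above the highest reachable one is open, since otherwise it is reachable too
    rw [Int.toNat_of_nonneg (by linarith [hM0 x])]
    by_contra hη
    have := (hM x).2 ((hM x).1.up (by simpa using hη))
    simp at this
  · have hyx : ∑ i, (y i - x i).natAbs = 1 := by
      rw [← hxy]; exact Fintype.sum_congr _ _ fun i => by omega
    have := hneighbor x y hxy
    have := hneighbor y x hyx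
    rw [Int.toNat_of_nonneg (by linarith [hM0 x]), Int.toNat_of_nonneg (by linarith [hM0 y]),
      abs_le]
    constructor <;> linarith

lemma exists_reachable_of_lt {L : (Fin n → ℤ) → ℕ} (hmin : ∀ L', IsLipSurface η L' → ∀ x, L x ≤ L' x)
    {k : ℕ} (hk : k < L 0) : ∃ h : ℤ, k ≤ h ∧ Reachable η (0, h) := by
  by_contra! hno
  have hbdd (x : Fin n → ℤ) : ∀ h ∈ {h | Reachable η (x, h)}, h < k + ∑ i, (x i).natAbs := by
    intro h hh
    obtain ⟨w, hw, hlen, hend⟩ := exists_down_word x 0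
    simp only [Pi.zero_apply, sub_zero] at hlen
    have hreach := hh.down hw
    rw [hend] at hreach
    by_contra! hge
    exact hno _ (by omega) hreach
  choose M hM using fun x =>
    Int.exists_greatest_of_bdd ⟨_, fun h hh => (hbdd x h hh).le⟩ ⟨0, reachable_height_zero (η := η) x⟩
  have := hmin _ (isLipSurface_of_isGreatest M fun x => ⟨(hM x).1, (hM x).2⟩) 0
  have := hbdd 0 _ (hM 0).1
  simp at this
  omega

/-- The start at level `0` from which the word `w` ends in column `0`. -/
def start (w : List (Step n)) : Site n := (-(w.map Step.shift).sum, 0)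

def climbingWords (k : ℕ) : Set (List (Step n)) :=
  {w | (upSites (start w) w).Nodup ∧ (k : ℤ) ≤ (endSite (start w) w).2}

lemma exists_mem_climbingWords {L : (Fin n → ℤ) → ℕ}
    (hmin : ∀ L', IsLipSurface η L' → ∀ x, L x ≤ L' x) {k : ℕ} (hk : k < L 0) :
    ∃ w ∈ climbingWords k, IsAdmissible η (start w) w := by
  obtain ⟨h, hkh, x₀, w, hadm, hend⟩ := exists_reachable_of_lt hmin hk
  obtain ⟨w', hend', hnodup, hsub⟩ := exists_nodup_upSites (x₀, 0) w
  have hstart : start w' = (x₀, 0) := by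
    have := congrArg Prod.fst (hend'.trans hend)
    rw [endSite_fst] at this
    simp only [start, Prod.mk.injEq, and_true]
    exact (eq_neg_of_add_eq_zero_left this).symm
  refine ⟨w', ⟨?_, ?_⟩, ?_⟩ <;> rw [hstart]
  · exact hnodup
  · rw [hend', hend]; exact hkh
  · exact fun q hq => hadm q (hsub hq)

def stepWeight (a b : ℝ≥0∞) (s : Step n) : ℝ≥0∞ := if s = none then a else b

lemma prod_map_stepWeight (a b : ℝ≥0∞) (w : List (Step n)) :
    (w.map (stepWeight a b)).prod = a ^ w.count none * b ^ (w.length - w.count none) := by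
  induction w with
  | nil => simp
  | cons s w ih =>
    have := w.count_le_length (a := none)
    rcases s with _ | d
    · simp [stepWeight, ih, pow_succ]; ring
    · simp [stepWeight, ih, Nat.sub_add_comm this, pow_succ]; ring

lemma sum_stepWeight (a b : ℝ≥0∞) : ∑ s : Step n, stepWeight a b s = a + 2 * n * b := by
  simp [stepWeight, Fintype.sum_option, mul_comm]

lemma tsum_prod_map_stepWeight (a b : ℝ≥0∞) :
    ∑' w : List (Step n), (w.map (stepWeight a b)).prod = (1 - (a + 2 * n * b))⁻¹ := by
  rw [ENNReal.tsum_prod_map_eq_tsum_pow, sum_stepWeight, ENNReal.tsum_geometric]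

variable {Ω : Type*} [MeasurableSpace Ω] {P : Measure Ω} {X : Site n → Ω → Bool}
  {a b : ℝ≥0∞}

lemma measure_isAdmissible_le (hindep : iIndepFun X P)
    (hq : ∀ z, P {ω | X z ω = false} = a * b) (hb : b ≤ 1) {k : ℕ} {w : List (Step n)}
    (hw : w ∈ climbingWords k) :
    P {ω | IsAdmissible (fun z => X z ω) (start w) w} ≤ b ^ k * (w.map (stepWeight a b)).prod := by
  obtain ⟨hnodup, hheight⟩ := hw
  have hevent : {ω | IsAdmissible (fun z => X z ω) (start w) w} =
      {ω | ∀ z ∈ (upSites (start w) w).toFinset, X z ω = false} := by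
    simp [IsAdmissible]
  have hcount : k + (w.length - w.count none) ≤ w.count none := by
    have := w.count_le_length (a := none)
    rw [endSite_snd] at hheight
    simp only [start] at hheight
    omega
  rw [hevent, measure_forall_mem_eq_false hindep hq, List.toFinset_card_of_nodup hnodup,
    length_upSites, prod_map_stepWeight]
  calc (a * b) ^ w.count none = a ^ w.count none * b ^ w.count none := mul_pow _ _ _
    _ ≤ a ^ w.count none * b ^ (k + (w.length - w.count none)) :=
      mul_le_mul_right (pow_le_pow_right_of_le_one' hb hcount) _
    _ = b ^ k * (a ^ w.count none * b ^ (w.length - w.count none)) := by ring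

lemma measure_lt_le_tsum (hindep : iIndepFun X P)
    (hq : ∀ z, P {ω | X z ω = false} = a * b) (hb : b ≤ 1) {L : Ω → (Fin n → ℤ) → ℕ}
    (hmin : ∀ᵐ ω ∂P, ∀ L', IsLipSurface (fun z => X z ω) L' → ∀ x, L ω x ≤ L' x) (k : ℕ) :
    P {ω | k < L ω 0} ≤ b ^ k * ∑' w : List (Step n), (w.map (stepWeight a b)).prod := by
  let E (w : List (Step n)) := {ω | IsAdmissible (fun z => X z ω) (start w) w}
  calc P {ω | k < L ω 0} ≤ P (⋃ w ∈ climbingWords k, E w) := by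
        refine measure_mono_ae (hmin.mono fun ω hω hk => ?_)
        obtain ⟨w, hw, hadm⟩ := exists_mem_climbingWords hω hk
        exact Set.mem_biUnion hw hadm
    _ ≤ ∑' w : climbingWords k, P (E w) := measure_biUnion_le P (Set.to_countable _) E
    _ ≤ ∑' w : climbingWords k, b ^ k * (w.1.map (stepWeight a b)).prod :=
        ENNReal.tsum_le_tsum fun w => measure_isAdmissible_le hindep hq hb w.2
    _ ≤ b ^ k * ∑' w : List (Step n), (w.map (stepWeight a b)).prod := by
        rw [ENNReal.tsum_mul_left]
        gcongr
        exact ENNReal.tsum_comp_le_tsum_of_injective Subtype.val_injective _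

end LipschitzPercolation

open LipschitzPercolation in
theorem stmt_10_general {Ω : Type*} [MeasurableSpace Ω] (P : Measure Ω) [IsProbabilityMeasure P]
    (n : ℕ) (p : ℝ)
    (hpc : 1 - ((2 * n + 2 : ℝ)) ^ (-2 : ℤ) < p)
    (X : ((Fin n → ℤ) × ℤ) → Ω → Bool) (hXmeas : ∀ z, Measurable (X z))
    (hindep : iIndepFun X P)
    (hdist : ∀ z, P {ω | X z ω = true} = ENNReal.ofReal p)
    -- `L` is the pointwise minimal Lipschitz open surface
    (L : Ω → (Fin n → ℤ) → ℕ)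
    (hLmin : ∀ᵐ ω ∂P, ∀ L' : (Fin n → ℤ) → ℕ,
      IsLipSurface (fun z => X z ω) L' → ∀ x, L ω x ≤ L' x) :
    (2 * n + 2 : ℝ) * (1 - p) < 1 ∧
    ∃ A : ℝ, ∀ k : ℕ,
      (P {ω | k < L ω 0}).toReal ≤ A * ((2 * n + 2 : ℝ) * (1 - p)) ^ k := by
  set N : ℝ := 2 * n + 2
  set ν := N * (1 - p)
  have hp1 : p ≤ 1 := ENNReal.ofReal_le_one.1 (hdist (0, 0) ▸ prob_le_one)
  have hN : 2 ≤ N := by simp [N]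
  have hνN : ν < N⁻¹ := mul_one_sub_lt_inv (by linarith) hpc
  have hν0 : 0 ≤ ν := mul_nonneg (by linarith) (by linarith)
  have hν1 : ν < 1 := hνN.trans_le (inv_le_one_of_one_le₀ (by linarith))
  have hp0 : 0 ≤ p := by nlinarith
  set a := ENNReal.ofReal N⁻¹
  set b := ENNReal.ofReal ν
  have hq (z : Site n) : P {ω | X z ω = false} = a * b := by
    rw [measure_eq_false (hXmeas z) hp0 (hdist z), ← ENNReal.ofReal_mul (by positivity),
      inv_mul_cancel_left₀ (by positivity)]
  have hS : a + 2 * n * b < 1 := by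
    rw [← ENNReal.ofReal_natCast, ← ENNReal.ofReal_ofNat 2, ← ENNReal.ofReal_mul (by norm_num),
      ← ENNReal.ofReal_mul (by positivity), ← ENNReal.ofReal_add (by positivity) (by positivity)]
    exact ENNReal.ofReal_lt_one.2 (inv_add_mul_lt_one hνN)
  refine ⟨hν1, ((1 - (a + 2 * n * b))⁻¹).toReal, fun k => ?_⟩
  have hbound := measure_lt_le_tsum hindep hq (ENNReal.ofReal_le_one.2 hν1.le) hLmin k
  rw [tsum_prod_map_stepWeight] at hbound
  calc (P {ω | k < L ω 0}).toReal ≤ (b ^ k * (1 - (a + 2 * n * b))⁻¹).toReal :=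
        ENNReal.toReal_mono (ENNReal.mul_ne_top (ENNReal.pow_ne_top ENNReal.ofReal_ne_top)
          (ENNReal.inv_ne_top.2 (tsub_pos_of_lt hS).ne')) hbound
    _ = _ := by rw [ENNReal.toReal_mul, ENNReal.toReal_pow, ENNReal.toReal_ofReal hν0, mul_comm]

theorem stmt_10 {Ω : Type*} [MeasurableSpace Ω] (P : Measure Ω) [IsProbabilityMeasure P]
    (n : ℕ) (hn : 1 ≤ n) (p : ℝ) (hp : p ∈ Set.Ioo (0 : ℝ) 1)
    (hpc : 1 - ((2 * n + 2 : ℝ)) ^ (-2 : ℤ) < p)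
    (X : ((Fin n → ℤ) × ℤ) → Ω → Bool) (hXmeas : ∀ z, Measurable (X z))
    (hindep : iIndepFun X P)
    (hdist : ∀ z, P {ω | X z ω = true} = ENNReal.ofReal p)
    -- `L` is the pointwise minimal Lipschitz open surface
    (L : Ω → (Fin n → ℤ) → ℕ)
    (hLmeas : ∀ x, Measurable (fun ω => L ω x))
    (hLsurf : ∀ᵐ ω ∂P, IsLipSurface (fun z => X z ω) (L ω))
    (hLmin : ∀ᵐ ω ∂P, ∀ L' : (Fin n → ℤ) → ℕ,
      IsLipSurface (fun z => X z ω) L' → ∀ x, L ω x ≤ L' x) :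
    (2 * n + 2 : ℝ) * (1 - p) < 1 ∧
    ∃ A : ℝ, ∀ k : ℕ,
      (P {ω | k < L ω 0}).toReal ≤ A * ((2 * n + 2 : ℝ) * (1 - p)) ^ k :=
  stmt_10_general P n p hpc X hXmeas hindep hdist L hLmin
end

section
/- Fix n ≥ 1 and 0 < r_in. Define g(r_out, c) = (( (r_out−r_in)^{2n−2}·r_out^{2n} )/( (r_out^n−(r_out−r_in)^n)²·c²·r_in^{2n−2} ) − 1)^{−1/2} for r_out > r_in and c > 0 small enough that the expression under the root is positive. Then there exists C₂ > 0 and c₀ > 0 such that g(r_out, c) ≤ C₂·c for all 0 < c ≤ c₀ and all r_out ≥ 2r_in. -/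
/-!
Write `s = r_out - r_in ≥ r_in`. Since `0 < r_out ^ n - s ^ n ≤ r_out ^ n` and
`r_in ^ (2n-2) ≤ s ^ (2n-2)`, the quotient under the root is at least `1 / c ^ 2`, uniformly in
`r_out ≥ 2 r_in`. For `c ≤ 1/2` this leaves `1 / c ^ 2 - 1 ≥ (1 / (2c)) ^ 2`, so `g ≤ 2c`.
-/

lemma one_div_sq_le_div_of_le_of_lt {a s R c : ℝ} {n : ℕ} (hn : n ≠ 0) (ha : 0 < a)
    (has : a ≤ s) (hsR : s < R) (hc : 0 < c) :
    1 / c ^ 2 ≤ s ^ (2 * n - 2) * R ^ (2 * n) / ((R ^ n - s ^ n) ^ 2 * c ^ 2 * a ^ (2 * n - 2)) := by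
  have hs : 0 < s := ha.trans_le has
  have hdiff : 0 < R ^ n - s ^ n := sub_pos.mpr (pow_lt_pow_left₀ hsR hs.le hn)
  have hdiff_le : (R ^ n - s ^ n) ^ 2 ≤ R ^ (2 * n) := by
    rw [mul_comm, pow_mul]
    exact pow_le_pow_left₀ hdiff.le (sub_le_self _ (pow_pos hs n).le) 2
  have hcancel : 1 / c ^ 2 * ((R ^ n - s ^ n) ^ 2 * c ^ 2 * a ^ (2 * n - 2))
      = (R ^ n - s ^ n) ^ 2 * a ^ (2 * n - 2) := by
    field_simp
  rw [le_div_iff₀ (mul_pos (mul_pos (pow_pos hdiff 2) (pow_pos hc 2)) (pow_pos ha _)), hcancel,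
    mul_comm (s ^ _)]
  exact mul_le_mul hdiff_le (pow_le_pow_left₀ ha.le has _) (by positivity)
    (pow_pos (hs.trans hsR) _).le

lemma inv_two_mul_sq_le_sub_one {c x : ℝ} (hc : 0 < c) (hc₀ : c ≤ 1 / 2) (hx : 1 / c ^ 2 ≤ x) :
    (1 / (2 * c)) ^ 2 ≤ x - 1 := by
  have h : (1 / (2 * c)) ^ 2 + 1 ≤ 1 / c ^ 2 := by
    rw [div_pow, one_pow, div_add_one (by positivity), div_le_div_iff₀ (by positivity)
      (by positivity)]
    nlinarith [mul_le_mul hc₀ hc₀ hc.le one_half_pos.le]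
  linarith

lemma one_div_sqrt_sub_one_le {c x : ℝ} (hc : 0 < c) (hx : (1 / (2 * c)) ^ 2 ≤ x - 1) :
    1 / √(x - 1) ≤ 2 * c := by
  have h : 1 / (2 * c) ≤ √(x - 1) := Real.le_sqrt_of_sq_le hx
  simpa only [one_div_one_div] using one_div_le_one_div_of_le (by positivity) h

theorem stmt_16 (n : ℕ) (hn : 1 ≤ n) (r_in : ℝ) (hrin : 0 < r_in) :
    ∃ C₂ c₀ : ℝ, 0 < C₂ ∧ 0 < c₀ ∧
      ∀ c r_out : ℝ, 0 < c → c ≤ c₀ → 2 * r_in ≤ r_out →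
        0 < (r_out - r_in) ^ (2 * n - 2) * r_out ^ (2 * n) /
              ((r_out ^ n - (r_out - r_in) ^ n) ^ 2 * c ^ 2 * r_in ^ (2 * n - 2)) - 1 ∧
        1 / Real.sqrt ((r_out - r_in) ^ (2 * n - 2) * r_out ^ (2 * n) /
              ((r_out ^ n - (r_out - r_in) ^ n) ^ 2 * c ^ 2 * r_in ^ (2 * n - 2)) - 1)
          ≤ C₂ * c := by
  refine ⟨2, 1 / 2, two_pos, one_half_pos, fun c r_out hc hc₀ hr => ?_⟩
  have hratio := one_div_sq_le_div_of_le_of_lt (Nat.one_le_iff_ne_zero.mp hn) hrin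
    (by linarith : r_in ≤ r_out - r_in) (by linarith : r_out - r_in < r_out) hc
  have hsq := inv_two_mul_sq_le_sub_one hc hc₀ hratio
  exact ⟨lt_of_lt_of_le (by positivity) hsq, one_div_sqrt_sub_one_le hc hsq⟩
end

section
/- Let u, v : ℝⁿ → ℝ be C² with bounded gradients and Hessians, let ν(w) = √(1+|∇w|²), and write the mean curvature operator as κ(w) = (Δw·ν(w)² − (D²w·∇w, ∇w))/ν(w)³. Then, provided ‖∇u‖_∞, ‖∇v‖_∞ ≤ 1, one has the error estimate |κ(u+v) − κ(u)| ≤ C(n)·( ‖D²v‖_∞·(1 + ‖∇u‖_∞² + ‖∇v‖_∞²) + ‖D²u‖_∞·(‖∇v‖_∞·‖∇u‖_∞ + ‖∇v‖_∞ + ‖∇v‖_∞²) ) for a dimensional constant C(n). -/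
open InnerProductSpace
set_option synthInstance.maxHeartbeats 1000000
set_option maxHeartbeats 2000000

noncomputable def trE {n : ℕ} (A : EuclideanSpace ℝ (Fin n) →L[ℝ] EuclideanSpace ℝ (Fin n)) : ℝ :=
  ∑ i, A (EuclideanSpace.single i 1) i

lemma trE_abs_le {n : ℕ} (A : EuclideanSpace ℝ (Fin n) →L[ℝ] EuclideanSpace ℝ (Fin n)) :
    |trE A| ≤ n * ‖A‖ := by
  calc |∑ i, A (EuclideanSpace.single i 1) i| ≤ ∑ i, |A (EuclideanSpace.single i 1) i| :=
        Finset.abs_sum_le_sum_abs _ _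
    _ ≤ ∑ _i : Fin n, ‖A‖ := by
        apply Finset.sum_le_sum
        intro i _
        calc |A (EuclideanSpace.single i 1) i| ≤ ‖A (EuclideanSpace.single i 1)‖ := by
              have := abs_real_inner_le_norm (A (EuclideanSpace.single i 1)) (EuclideanSpace.single i (1:ℝ))
              simpa [EuclideanSpace.inner_single_right] using this
          _ ≤ ‖A‖ * ‖EuclideanSpace.single i (1:ℝ)‖ := A.le_opNorm _
          _ = ‖A‖ := by simp [EuclideanSpace.norm_single]
    _ = n * ‖A‖ := by simp [Finset.sum_const, mul_comm]

lemma trE_add {n : ℕ} (A B : EuclideanSpace ℝ (Fin n) →L[ℝ] EuclideanSpace ℝ (Fin n)) :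
    trE (A + B) = trE A + trE B := by
  simp [trE, Finset.sum_add_distrib]

lemma inner_op_bound {n : ℕ} (A : EuclideanSpace ℝ (Fin n) →L[ℝ] EuclideanSpace ℝ (Fin n))
    (x y : EuclideanSpace ℝ (Fin n)) : |(inner ℝ (A x) y : ℝ)| ≤ ‖A‖ * ‖x‖ * ‖y‖ := by
  calc |(inner ℝ (A x) y : ℝ)| ≤ ‖A x‖ * ‖y‖ := abs_real_inner_le_norm _ _
    _ ≤ ‖A‖ * ‖x‖ * ‖y‖ := by
        have := A.le_opNorm x
        have := norm_nonneg y
        nlinarith [norm_nonneg (A x)]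



lemma inv_cube_diff (μ ν g : ℝ) (hμ1 : 1 ≤ μ) (hν1 : 1 ≤ ν) (h : |μ - ν| ≤ g) :
    |1 / μ ^ 3 - 1 / ν ^ 3| ≤ 3 * g := by
  have hμ0 : (0:ℝ) < μ := by linarith
  have hν0 : (0:ℝ) < ν := by linarith
  have hid : 1 / μ ^ 3 - 1 / ν ^ 3 = (ν - μ) * (ν ^ 2 + ν * μ + μ ^ 2) / (μ ^ 3 * ν ^ 3) := by
    field_simp; ring
  rw [hid, abs_div, abs_mul, abs_mul, abs_pow, abs_pow, abs_of_pos hμ0, abs_of_pos hν0]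
  have h3 : |ν ^ 2 + ν * μ + μ ^ 2| = ν ^ 2 + ν * μ + μ ^ 2 := abs_of_pos (by nlinarith)
  rw [h3, div_le_iff₀ (by positivity)]
  have hb' : |ν - μ| ≤ g := by rw [abs_sub_comm]; exact h
  have hk : ν ^ 2 + ν * μ + μ ^ 2 ≤ 3 * (μ ^ 3 * ν ^ 3) := by
    have r1 : ν ^ 2 ≤ ν ^ 3 := by nlinarith [sq_nonneg ν]
    have r2 : ν ^ 3 ≤ μ ^ 3 * ν ^ 3 := le_mul_of_one_le_left (by positivity) (one_le_pow₀ hμ1)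
    have r3 : μ ^ 2 ≤ μ ^ 3 := by nlinarith [sq_nonneg μ]
    have r4 : μ ^ 3 ≤ μ ^ 3 * ν ^ 3 := le_mul_of_one_le_right (by positivity) (one_le_pow₀ hν1)
    have hprod : (1:ℝ) ≤ μ * ν := by nlinarith
    have r5 : μ * ν ≤ (μ * ν) ^ 3 := by nlinarith [sq_nonneg (μ * ν)]
    nlinarith [r5, (by ring : (μ * ν) ^ 3 = μ ^ 3 * ν ^ 3)]
  have hg0 : 0 ≤ g := le_trans (abs_nonneg _) hb'
  nlinarith [abs_nonneg (ν - μ), mul_pos (pow_pos hμ0 3) (pow_pos hν0 3)]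

lemma inv_diff (μ ν g : ℝ) (hμ1 : 1 ≤ μ) (hν1 : 1 ≤ ν) (h : |μ - ν| ≤ g) :
    |1 / μ - 1 / ν| ≤ g := by
  have hμ0 : (0:ℝ) < μ := by linarith
  have hν0 : (0:ℝ) < ν := by linarith
  have hid : 1 / μ - 1 / ν = (ν - μ) / (μ * ν) := by field_simp
  rw [hid, abs_div, abs_mul, abs_of_pos hμ0, abs_of_pos hν0, div_le_iff₀ (by positivity)]
  have hb' : |ν - μ| ≤ g := by rw [abs_sub_comm]; exact h
  have hprod : (1:ℝ) ≤ μ * ν := by nlinarith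
  have hg0 : 0 ≤ g := le_trans (abs_nonneg _) hb'
  nlinarith [abs_nonneg (ν - μ)]

lemma comb_aux (x1 x2 x3 x4 x5 : ℝ) (n : ℕ) (Gu Gv Hu Hv : ℝ)
    (e1 : |x1| ≤ n * Hv) (e2 : |x2| ≤ Hv) (e3 : |x3| ≤ n * Hu * Gv)
    (e4 : |x4| ≤ Hu * (2 * Gv * Gu + Gv ^ 2)) (e5 : |x5| ≤ Hu * (3 * Gv))
    (hGu0 : 0 ≤ Gu) (hGv0 : 0 ≤ Gv) (hHu0 : 0 ≤ Hu) (hHv0 : 0 ≤ Hv) :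
    |x1 - x2 + x3 - x4 - x5| ≤ (n + 3) * (Hv * (1 + Gu ^ 2 + Gv ^ 2) + Hu * (Gv * Gu + Gv + Gv ^ 2)) := by
  have tri : |x1 - x2 + x3 - x4 - x5| ≤ |x1| + |x2| + |x3| + |x4| + |x5| := by
    have t1 := abs_sub (x1 - x2 + x3 - x4) x5
    have t2 := abs_sub (x1 - x2 + x3) x4
    have t3 := abs_add_le (x1 - x2) x3
    have t4 := abs_sub x1 x2
    linarith
  have hn0 : (0:ℝ) ≤ n := Nat.cast_nonneg n
  have key2 : (n:ℝ) * Hv + Hv + n * Hu * Gv + Hu * (2 * Gv * Gu + Gv ^ 2) + Hu * (3 * Gv)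
      ≤ (n + 3) * (Hv * (1 + Gu ^ 2 + Gv ^ 2) + Hu * (Gv * Gu + Gv + Gv ^ 2)) := by
    nlinarith [mul_nonneg hHv0 (mul_nonneg hGu0 hGu0), mul_nonneg hHv0 (mul_nonneg hGv0 hGv0),
      mul_nonneg hHu0 (mul_nonneg hGv0 hGu0), mul_nonneg hHu0 hGv0,
      mul_nonneg hHu0 (mul_nonneg hGv0 hGv0), mul_nonneg hn0 hHv0,
      mul_nonneg hn0 (mul_nonneg hHu0 (mul_nonneg hGv0 hGv0)),
      mul_nonneg hn0 (mul_nonneg hHu0 (mul_nonneg hGv0 hGu0)),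
      mul_nonneg hn0 (mul_nonneg hHv0 (mul_nonneg hGu0 hGu0)),
      mul_nonneg hn0 (mul_nonneg hHv0 (mul_nonneg hGv0 hGv0))]
  linarith

lemma key {n : ℕ} (a b : EuclideanSpace ℝ (Fin n)) (A B : EuclideanSpace ℝ (Fin n) →L[ℝ] EuclideanSpace ℝ (Fin n))
    (Gu Gv Hu Hv : ℝ)
    (ha : ‖a‖ ≤ Gu) (hb : ‖b‖ ≤ Gv) (hA : ‖A‖ ≤ Hu) (hB : ‖B‖ ≤ Hv)
    (hGu : Gu ≤ 1) :
    |(trE (A + B) * Real.sqrt (1 + ‖a + b‖ ^ 2) ^ 2 - inner ℝ ((A + B) (a + b)) (a + b)) /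
        Real.sqrt (1 + ‖a + b‖ ^ 2) ^ 3 -
      (trE A * Real.sqrt (1 + ‖a‖ ^ 2) ^ 2 - (inner ℝ (A a) a : ℝ)) / Real.sqrt (1 + ‖a‖ ^ 2) ^ 3|
    ≤ (n + 3) * (Hv * (1 + Gu ^ 2 + Gv ^ 2) + Hu * (Gv * Gu + Gv + Gv ^ 2)) := by
  set μ := Real.sqrt (1 + ‖a + b‖ ^ 2) with hμdef
  set ν := Real.sqrt (1 + ‖a‖ ^ 2) with hνdef
  have hμ2 : μ ^ 2 = 1 + ‖a + b‖ ^ 2 := Real.sq_sqrt (by positivity)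
  have hν2 : ν ^ 2 = 1 + ‖a‖ ^ 2 := Real.sq_sqrt (by positivity)
  have hμ1 : 1 ≤ μ := by nlinarith [Real.sqrt_nonneg (1 + ‖a + b‖ ^ 2), norm_nonneg (a+b)]
  have hν1 : 1 ≤ ν := by nlinarith [Real.sqrt_nonneg (1 + ‖a‖ ^ 2), norm_nonneg a]
  have hμ0 : μ ≠ 0 := by positivity
  have hν0 : ν ≠ 0 := by positivity
  have hμν : |μ - ν| ≤ ‖b‖ := by
    have hs : |‖a + b‖ - ‖a‖| ≤ ‖b‖ := by simpa using abs_norm_sub_norm_le (a + b) a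
    have hsμ : ‖a + b‖ ≤ μ := by nlinarith [norm_nonneg (a+b)]
    have hsν : ‖a‖ ≤ ν := by nlinarith [norm_nonneg a]
    rw [abs_le] at hs ⊢
    constructor <;> nlinarith [norm_nonneg b, norm_nonneg a, norm_nonneg (a+b)]
  have hGv0 : (0:ℝ) ≤ Gv := le_trans (norm_nonneg b) hb
  have hGu0 : (0:ℝ) ≤ Gu := le_trans (norm_nonneg a) ha
  have hHu0 : (0:ℝ) ≤ Hu := le_trans (norm_nonneg A) hA
  have hHv0 : (0:ℝ) ≤ Hv := le_trans (norm_nonneg B) hB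
  have hab : ‖a + b‖ ≤ Gu + Gv := le_trans (norm_add_le a b) (by linarith)
  have hinner : (inner ℝ ((A + B) (a + b)) (a + b) : ℝ) =
      inner ℝ (A a) a + (inner ℝ (A a) b + inner ℝ (A b) a + inner ℝ (A b) b) + inner ℝ (B (a + b)) (a + b) := by
    simp [inner_add_left, inner_add_right, map_add]; ring
  have hdecomp :
      (trE (A + B) * μ ^ 2 - inner ℝ ((A + B) (a + b)) (a + b)) / μ ^ 3 -
        (trE A * ν ^ 2 - (inner ℝ (A a) a : ℝ)) / ν ^ 3 =
      trE B / μ - (inner ℝ (B (a + b)) (a + b) : ℝ) / μ ^ 3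
        + trE A * (1 / μ - 1 / ν)
        - ((inner ℝ (A a) b : ℝ) + inner ℝ (A b) a + inner ℝ (A b) b) / μ ^ 3
        - (inner ℝ (A a) a : ℝ) * (1 / μ ^ 3 - 1 / ν ^ 3) := by
    rw [trE_add, hinner]
    field_simp
    ring
  rw [hdecomp]
  have habs_μ : |μ| = μ := abs_of_pos (by linarith)
  have habs_ν : |ν| = ν := abs_of_pos (by linarith)
  have hμ3 : (1:ℝ) ≤ μ ^ 3 := one_le_pow₀ hμ1
  have hν3 : (1:ℝ) ≤ ν ^ 3 := one_le_pow₀ hν1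
  -- e1
  have e1 : |trE B / μ| ≤ n * Hv := by
    rw [abs_div, habs_μ]
    have h1 : |trE B| ≤ n * Hv := (trE_abs_le B).trans
      (by nlinarith [Nat.cast_nonneg (α := ℝ) n])
    calc |trE B| / μ ≤ |trE B| / 1 :=
          div_le_div_of_nonneg_left (abs_nonneg _) one_pos hμ1
      _ ≤ n * Hv := by simpa using h1
  -- e2
  have e2 : |(inner ℝ (B (a + b)) (a + b) : ℝ) / μ ^ 3| ≤ Hv := by
    rw [abs_div, abs_pow, habs_μ]
    have h1 : |(inner ℝ (B (a + b)) (a + b) : ℝ)| ≤ Hv * ‖a + b‖ ^ 2 := by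
      have := inner_op_bound B (a + b) (a + b)
      nlinarith [norm_nonneg (a + b), norm_nonneg B]
    have h2 : ‖a + b‖ ^ 2 ≤ μ ^ 3 := by nlinarith [norm_nonneg (a + b)]
    rw [div_le_iff₀ (by positivity)]
    nlinarith [abs_nonneg (inner ℝ (B (a + b)) (a + b) : ℝ)]
  -- e3
  have e3 : |trE A * (1 / μ - 1 / ν)| ≤ n * Hu * Gv := by
    rw [abs_mul]
    have h1 : |trE A| ≤ n * Hu := (trE_abs_le A).trans
      (by nlinarith [Nat.cast_nonneg (α := ℝ) n])
    have h2 : |1 / μ - 1 / ν| ≤ Gv := inv_diff μ ν Gv hμ1 hν1 (hμν.trans hb)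
    calc |trE A| * |1 / μ - 1 / ν| ≤ (n * Hu) * Gv :=
          mul_le_mul h1 h2 (abs_nonneg _) (by positivity)
      _ = n * Hu * Gv := by ring
  -- e4
  have e4 : |((inner ℝ (A a) b : ℝ) + inner ℝ (A b) a + inner ℝ (A b) b) / μ ^ 3|
      ≤ Hu * (2 * Gv * Gu + Gv ^ 2) := by
    rw [abs_div, abs_pow, habs_μ]
    have h1 : |(inner ℝ (A a) b : ℝ) + inner ℝ (A b) a + inner ℝ (A b) b|
        ≤ Hu * (2 * Gv * Gu + Gv ^ 2) := by
      have i1 := inner_op_bound A a b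
      have i2 := inner_op_bound A b a
      have i3 := inner_op_bound A b b
      have t := abs_add_le ((inner ℝ (A a) b : ℝ) + inner ℝ (A b) a) (inner ℝ (A b) b)
      have t2 := abs_add_le (inner ℝ (A a) b : ℝ) (inner ℝ (A b) a)
      have m1 : ‖A‖ * ‖a‖ * ‖b‖ ≤ Hu * Gu * Gv :=
        mul_le_mul (mul_le_mul hA ha (norm_nonneg a) hHu0) hb (norm_nonneg b) (by positivity)
      have m2 : ‖A‖ * ‖b‖ * ‖a‖ ≤ Hu * Gv * Gu :=
        mul_le_mul (mul_le_mul hA hb (norm_nonneg b) hHu0) ha (norm_nonneg a) (by positivity)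
      have m3 : ‖A‖ * ‖b‖ * ‖b‖ ≤ Hu * Gv * Gv :=
        mul_le_mul (mul_le_mul hA hb (norm_nonneg b) hHu0) hb (norm_nonneg b) (by positivity)
      nlinarith
    rw [div_le_iff₀ (by positivity)]
    nlinarith [abs_nonneg ((inner ℝ (A a) b : ℝ) + inner ℝ (A b) a + inner ℝ (A b) b),
      mul_nonneg hHu0 (by nlinarith : (0:ℝ) ≤ 2 * Gv * Gu + Gv ^ 2)]
  -- e5
  have e5 : |(inner ℝ (A a) a : ℝ) * (1 / μ ^ 3 - 1 / ν ^ 3)| ≤ Hu * (3 * Gv) := by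
    rw [abs_mul]
    have h1 : |(inner ℝ (A a) a : ℝ)| ≤ Hu := by
      have h1a : ‖A‖ * ‖a‖ * ‖a‖ ≤ Hu * Gu * Gu :=
        mul_le_mul (mul_le_mul hA ha (norm_nonneg a) hHu0) ha (norm_nonneg a) (by positivity)
      have hGu2 : Gu * Gu ≤ 1 := mul_le_one₀ hGu hGu0 hGu
      have := inner_op_bound A a a
      nlinarith [mul_le_mul_of_nonneg_left hGu2 hHu0]
    have h2 : |1 / μ ^ 3 - 1 / ν ^ 3| ≤ 3 * Gv := by
      have := inv_cube_diff μ ν Gv hμ1 hν1 (hμν.trans hb)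
      linarith
    nlinarith [abs_nonneg (inner ℝ (A a) a : ℝ), abs_nonneg (1 / μ ^ 3 - 1 / ν ^ 3)]
  exact comb_aux _ _ _ _ _ n Gu Gv Hu Hv e1 e2 e3 e4 e5 hGu0 hGv0 hHu0 hHv0



noncomputable def nuOp {n : ℕ} (u : EuclideanSpace ℝ (Fin n) → ℝ)
    (x : EuclideanSpace ℝ (Fin n)) : ℝ :=
  Real.sqrt (1 + ‖gradient u x‖ ^ 2)

noncomputable def lapOp {n : ℕ} (u : EuclideanSpace ℝ (Fin n) → ℝ)
    (x : EuclideanSpace ℝ (Fin n)) : ℝ :=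
  ∑ i, fderiv ℝ (gradient u) x (EuclideanSpace.single i 1) i

/-- The quadratic form `(D²u · ∇u, ∇u)`. -/
noncomputable def hessQ {n : ℕ} (u : EuclideanSpace ℝ (Fin n) → ℝ)
    (x : EuclideanSpace ℝ (Fin n)) : ℝ :=
  inner ℝ (fderiv ℝ (gradient u) x (gradient u x)) (gradient u x)

/-- The mean curvature operator `κ(w) = (Δw·ν(w)² − (D²w·∇w,∇w)) / ν(w)³`. -/
noncomputable def kappaOp {n : ℕ} (u : EuclideanSpace ℝ (Fin n) → ℝ)
    (x : EuclideanSpace ℝ (Fin n)) : ℝ :=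
  (lapOp u x * nuOp u x ^ 2 - hessQ u x) / nuOp u x ^ 3

theorem stmt_17 (n : ℕ) (hn : 1 ≤ n) :
    ∃ C : ℝ, 0 < C ∧
      ∀ (u v : EuclideanSpace ℝ (Fin n) → ℝ) (Gu Gv Hu Hv : ℝ),
        ContDiff ℝ 2 u → ContDiff ℝ 2 v →
        (∀ x, ‖gradient u x‖ ≤ Gu) → (∀ x, ‖gradient v x‖ ≤ Gv) →
        (∀ x, ‖fderiv ℝ (gradient u) x‖ ≤ Hu) →
        (∀ x, ‖fderiv ℝ (gradient v) x‖ ≤ Hv) →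
        Gu ≤ 1 → Gv ≤ 1 →
        ∀ x, |kappaOp (u + v) x - kappaOp u x| ≤
          C * (Hv * (1 + Gu ^ 2 + Gv ^ 2) + Hu * (Gv * Gu + Gv + Gv ^ 2)) := by
  refine ⟨n + 3, by positivity, ?_⟩
  intro u v Gu Gv Hu Hv hu hv hgu hgv hhu hhv hGu hGv x
  have hud : Differentiable ℝ u := hu.differentiable (by norm_num)
  have hvd : Differentiable ℝ v := hv.differentiable (by norm_num)
  have hgadd : ∀ y, gradient (u + v) y = gradient u y + gradient v y := fun y => by
    unfold gradient
    rw [fderiv_add (hud y) (hvd y), map_add]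
  have hgud : Differentiable ℝ (gradient u) := by
    have h : gradient u = fun x => (InnerProductSpace.toDual ℝ (EuclideanSpace ℝ (Fin n))).symm
        (fderiv ℝ u x) := rfl
    rw [h]
    exact (((InnerProductSpace.toDual ℝ (EuclideanSpace ℝ (Fin n))).symm.contDiff.comp
      (hu.fderiv_right (m := 1) (by norm_num))).differentiable (by norm_num))
  have hgvd : Differentiable ℝ (gradient v) := by
    have h : gradient v = fun x => (InnerProductSpace.toDual ℝ (EuclideanSpace ℝ (Fin n))).symm
        (fderiv ℝ v x) := rfl
    rw [h]
    exact (((InnerProductSpace.toDual ℝ (EuclideanSpace ℝ (Fin n))).symm.contDiff.comp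
      (hv.fderiv_right (m := 1) (by norm_num))).differentiable (by norm_num))
  have hfadd : fderiv ℝ (gradient (u + v)) x
      = fderiv ℝ (gradient u) x + fderiv ℝ (gradient v) x := by
    have h : gradient (u + v) = fun y => gradient u y + gradient v y := funext hgadd
    rw [h, fderiv_fun_add (hgud x) (hgvd x)]
  set a := gradient u x
  set b := gradient v x
  set A := fderiv ℝ (gradient u) x
  set B := fderiv ℝ (gradient v) x
  have hk1 : kappaOp (u + v) x =
      (trE (A + B) * Real.sqrt (1 + ‖a + b‖ ^ 2) ^ 2 - inner ℝ ((A + B) (a + b)) (a + b)) /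
        Real.sqrt (1 + ‖a + b‖ ^ 2) ^ 3 := by
    unfold kappaOp nuOp lapOp hessQ trE
    rw [hgadd x, hfadd]
  have hk2 : kappaOp u x =
      (trE A * Real.sqrt (1 + ‖a‖ ^ 2) ^ 2 - (inner ℝ (A a) a : ℝ)) /
        Real.sqrt (1 + ‖a‖ ^ 2) ^ 3 := rfl
  rw [hk1, hk2]
  exact key a b A B Gu Gv Hu Hv (hgu x) (hgv x) (hhu x) (hhv x) hGu
end
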